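/- Let f be an excursion and let s,t ∈ [0,1] with s ≤ t. Then inf_{[s ∧_f t, t]} f = inf_{[s,t]} f, and s ∧_f t = sup{r ≤ s : r ⪯_f t} = sup{r ≤ s : f(r−) ≤ inf_{[s,t]} f}. -/

import Mathlib

open Set Filter Topology
open scoped Classical

noncomputable section

/-- Left limit of `f` at `t`, with the convention `f(0−) = 0`. -/
def lm (f : ℝ → ℝ) (t : ℝ) : ℝ := if t = 0 then 0 else Function.leftLim f t

/-- The jump `Δ_t(f) = f t − f(t−)`. -/
def jump (f : ℝ → ℝ) (t : ℝ) : ℝ := f t - lm f t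

/-- `inf_{[s,t]} f`. -/
def infIcc (f : ℝ → ℝ) (s t : ℝ) : ℝ := sInf (f '' Icc s t)

/-- An excursion: a càdlàg function on `[0,1]`, nonnegative, vanishing at `1` (and
extended by `0` outside `[0,1]`), all of whose jumps are nonnegative. -/
structure IsExcursion (f : ℝ → ℝ) : Prop where
  nonneg : ∀ t ∈ Icc (0:ℝ) 1, 0 ≤ f t
  zero_outside : ∀ t, t ∉ Icc (0:ℝ) 1 → f t = 0
  rightCont : ∀ t ∈ Ico (0:ℝ) 1, Tendsto f (𝓝[>] t) (𝓝 (f t))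
  leftLimEx : ∀ t ∈ Ioc (0:ℝ) 1, Tendsto f (𝓝[<] t) (𝓝 (Function.leftLim f t))
  one : f 1 = 0
  jump_nonneg : ∀ t ∈ Icc (0:ℝ) 1, 0 ≤ jump f t

/-- The genealogical relation `s ⪯_f t` : `s ≤ t` and `f(s−) ≤ inf_{[s,t]} f`. -/
def pre (f : ℝ → ℝ) (s t : ℝ) : Prop := s ≤ t ∧ lm f s ≤ infIcc f s t

/-- `x_s^t(f) = 1_{s ≤ t} · max(inf_{[s,t]} f − f(s−), 0)`. -/
def xst (f : ℝ → ℝ) (s t : ℝ) : ℝ := if s ≤ t then max (infIcc f s t - lm f s) 0 else 0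

/-- The most recent common ancestor `s ∧_f t`. -/
def mrca (f : ℝ → ℝ) (s t : ℝ) : ℝ := sSup {r : ℝ | 0 ≤ r ∧ pre f r s ∧ pre f r t}

/-- `δ_t(a,b) = min(|a−b|, Δ_t(f) − |a−b|)`, the circle pseudo-distance on `[0, Δ_t(f)]`. -/
def cdel (f : ℝ → ℝ) (t a b : ℝ) : ℝ := min |a - b| (jump f t - |a - b|)

/-- `d_O(s,t) = ∑_{s ≺_f r ⪯_f t} δ_r(0, x_r^t)`. -/
def dO (f : ℝ → ℝ) (s t : ℝ) : ℝ :=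
  ∑' r : ℝ, if pre f s r ∧ s < r ∧ pre f r t then cdel f r 0 (xst f r t) else 0

/-- `d_T(s,t) = f t − inf_{[s,t]} f − ∑_{s ≺_f r ⪯_f t} x_r^t`, intended for `s ⪯_f t`. -/
def dTanc (f : ℝ → ℝ) (s t : ℝ) : ℝ :=
  f t - infIcc f s t - ∑' r : ℝ, if pre f s r ∧ s < r ∧ pre f r t then xst f r t else 0

/-- The looptree pseudo-distance `d_L[f]`. -/
def dL (f : ℝ → ℝ) (s t : ℝ) : ℝ :=
  cdel f (mrca f s t) (xst f (mrca f s t) s) (xst f (mrca f s t) t)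
    + dO f (mrca f s t) s + dO f (mrca f s t) t

/-- The tree pseudo-distance `d_T[f]`. -/
def dT (f : ℝ → ℝ) (s t : ℝ) : ℝ := dTanc f (mrca f s t) s + dTanc f (mrca f s t) t

/-- The vernation pseudo-distance `d_V[f] = d_T[f] + 2·d_L[f]`. -/
def dV (f : ℝ → ℝ) (s t : ℝ) : ℝ := dT f s t + 2 * dL f s t

/-- `Jf(t) = ∑_{r ⪯_f t} x_r^t(f)`. -/
def Jop (f : ℝ → ℝ) (t : ℝ) : ℝ := ∑' r : ℝ, if pre f r t then xst f r t else 0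

/-- `J^ε f(t) = ∑_{r ⪯_f t, Δ_r(f) ≥ ε} x_r^t(f)`. -/
def Jeps (f : ℝ → ℝ) (ε : ℝ) (t : ℝ) : ℝ :=
  ∑' r : ℝ, if pre f r t ∧ ε ≤ jump f r then xst f r t else 0

/-- Pure jump growth (PJG) excursion: `f(t) = ∑_{r ⪯_f t} x_r^t(f)` on `[0,1]`. -/
def IsPJG (f : ℝ → ℝ) : Prop := ∀ t ∈ Icc (0:ℝ) 1, f t = Jop f t

/-- An increasing bijection from `[0,1]` onto itself. -/
def IncBij (l : ℝ → ℝ) : Prop :=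
  StrictMonoOn l (Icc (0:ℝ) 1) ∧ Set.BijOn l (Icc (0:ℝ) 1) (Icc (0:ℝ) 1)

/-- The Skorokhod distance `ρ` on functions `[0,1] → ℝ`. -/
def skor (f g : ℝ → ℝ) : ℝ :=
  sInf {c : ℝ | 0 ≤ c ∧ ∃ l : ℝ → ℝ, IncBij l ∧
    ∀ x ∈ Icc (0:ℝ) 1, |l x - x| ≤ c ∧ |f x - g (l x)| ≤ c}

/-!
Let `I = inf_{[s,t]} f` and let `m` be the supremum of the times `r ∈ [0, s]` with
`f(r−) ≤ I`. Every `u ∈ (m, s]` has `f u ≥ I`, since otherwise `f(u−) ≤ f u < I`;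
right-continuity extends this to `u = m`, so `inf_{[m,t]} f = I`. Since `f(r−)` tends to
`f(m−)` as `r ↑ m`, also `f(m−) ≤ I`, i.e. `m ⪯_f t`. Any `r ≤ s` with `r ⪯_f t` has
`f(r−) ≤ inf_{[r,t]} f ≤ I`, so `m` is the largest such `r`; for `s ≤ t` these `r` are
exactly the common ancestors of `s` and `t`.
-/

open Function

lemma le_infIcc {f : ℝ → ℝ} {a b c : ℝ} (hab : a ≤ b) (h : ∀ x ∈ Icc a b, c ≤ f x) :
    c ≤ infIcc f a b :=
  le_csInf ((nonempty_Icc.mpr hab).image f) (by rintro _ ⟨x, hx, rfl⟩; exact h x hx)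

lemma lm_sSup_le {f : ℝ → ℝ}
    (hlim : ∀ t ∈ Ioc (0:ℝ) 1, Tendsto f (𝓝[<] t) (𝓝 (leftLim f t)))
    {S : Set ℝ} {c : ℝ} (hne : S.Nonempty) (hS : S ⊆ Icc 0 1) (hc : ∀ r ∈ S, lm f r ≤ c) :
    lm f (sSup S) ≤ c := by
  obtain ⟨r, hr⟩ := hne
  have hlub : IsLUB S (sSup S) := isLUB_csSup ⟨r, hr⟩ ⟨1, fun x hx => (hS hx).2⟩
  have hm1 : sSup S ≤ 1 := hlub.2 fun x hx => (hS hx).2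
  rcases ((hS hr).1.trans (hlub.1 hr)).eq_or_lt with hm0 | hm0
  · have hmr : sSup S = r := le_antisymm (hm0 ▸ (hS hr).1) (hlub.1 hr)
    exact hmr ▸ hc r hr
  have hcont : ContinuousWithinAt (leftLim f) (Iic (sSup S)) (sSup S) :=
    continuousWithinAt_leftLim_Iic (hlim _ ⟨hm0, hm1⟩)
  have hfreq : ∃ᶠ x in 𝓝[≤] sSup S, leftLim f x ≤ c := by
    refine ((hlub.frequently_mem ⟨r, hr⟩).and_eventually
      (nhdsWithin_le_nhds (Ioi_mem_nhds hm0))).mono fun x ⟨hxS, hx0⟩ => ?_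
    simpa [lm, hx0.ne'] using hc x hxS
  simpa [lm, hm0.ne'] using le_of_tendsto_of_frequently hcont hfreq

namespace IsExcursion

variable {f : ℝ → ℝ}

lemma apply_nonneg (hf : IsExcursion f) (x : ℝ) : 0 ≤ f x := by
  by_cases hx : x ∈ Icc (0:ℝ) 1
  · exact hf.nonneg x hx
  · rw [hf.zero_outside x hx]

lemma bddBelow_image (hf : IsExcursion f) (a b : ℝ) : BddBelow (f '' Icc a b) :=
  ⟨0, by rintro _ ⟨x, -, rfl⟩; exact hf.apply_nonneg x⟩

lemma infIcc_le (hf : IsExcursion f) {a b x : ℝ} (hx : x ∈ Icc a b) : infIcc f a b ≤ f x :=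
  csInf_le (hf.bddBelow_image a b) ⟨x, hx, rfl⟩

lemma infIcc_le_infIcc (hf : IsExcursion f) {a b a' b' : ℝ} (hab : a ≤ b)
    (h : Icc a b ⊆ Icc a' b') : infIcc f a' b' ≤ infIcc f a b :=
  csInf_le_csInf (hf.bddBelow_image a' b') ((nonempty_Icc.mpr hab).image f) (image_mono h)

lemma lm_le_apply (hf : IsExcursion f) {x : ℝ} (hx : x ∈ Icc (0:ℝ) 1) : lm f x ≤ f x := by
  have := hf.jump_nonneg x hx
  rw [jump] at this
  linarith

lemma pre_of_pre_of_le (hf : IsExcursion f) {r s t : ℝ} (hrt : pre f r t) (hrs : r ≤ s)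
    (hst : s ≤ t) : pre f r s :=
  ⟨hrs, hrt.2.trans (hf.infIcc_le_infIcc hrs (Icc_subset_Icc le_rfl hst))⟩

end IsExcursion

def lastBelow (f : ℝ → ℝ) (s c : ℝ) : ℝ := sSup {r : ℝ | 0 ≤ r ∧ r ≤ s ∧ lm f r ≤ c}

section lastBelow

variable {f : ℝ → ℝ} {s c : ℝ}

lemma le_lastBelow {r : ℝ} (hr0 : 0 ≤ r) (hrs : r ≤ s) (hr : lm f r ≤ c) :
    r ≤ lastBelow f s c :=
  le_csSup ⟨s, fun _ hx => hx.2.1⟩ ⟨hr0, hrs, hr⟩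

lemma lastBelow_nonneg : 0 ≤ lastBelow f s c :=
  Real.sSup_nonneg fun _ hr => hr.1

lemma lastBelow_le (hs : 0 ≤ s) : lastBelow f s c ≤ s :=
  Real.sSup_le (fun _ hr => hr.2.1) hs

lemma lm_lastBelow_le (hlim : ∀ t ∈ Ioc (0:ℝ) 1, Tendsto f (𝓝[<] t) (𝓝 (leftLim f t)))
    (hs : s ∈ Icc (0:ℝ) 1) (hc : 0 ≤ c) : lm f (lastBelow f s c) ≤ c :=
  lm_sSup_le hlim ⟨0, le_rfl, hs.1, by simpa [lm] using hc⟩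
    (fun _ hr => ⟨hr.1, hr.2.1.trans hs.2⟩) fun _ hr => hr.2.2

lemma IsExcursion.le_apply_of_lastBelow_lt (hf : IsExcursion f) (hs1 : s ≤ 1) {u : ℝ}
    (hu : lastBelow f s c < u) (hus : u ≤ s) : c ≤ f u := by
  by_contra! hlt
  have hu0 : 0 ≤ u := lastBelow_nonneg.trans hu.le
  exact hu.not_ge <| le_lastBelow hu0 hus <|
    (hf.lm_le_apply ⟨hu0, hus.trans hs1⟩).trans hlt.le

lemma IsExcursion.le_apply_of_mem_Icc_lastBelow (hf : IsExcursion f) (hs : s ∈ Icc (0:ℝ) 1)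
    (hcs : c ≤ f s) {u : ℝ} (hu : u ∈ Icc (lastBelow f s c) s) : c ≤ f u := by
  rcases hu.1.eq_or_lt with rfl | hmu
  · rcases hu.2.eq_or_lt with hms | hms
    · rwa [hms]
    by_contra! hlt
    have hright := hf.rightCont _ ⟨lastBelow_nonneg, hms.trans_le hs.2⟩
    obtain ⟨v, hv, hvm⟩ := ((hright.eventually (gt_mem_nhds hlt)).and
      (Ioc_mem_nhdsGT hms)).exists
    exact hv.not_ge (hf.le_apply_of_lastBelow_lt hs.2 hvm.1 hvm.2)
  · exact hf.le_apply_of_lastBelow_lt hs.2 hmu hu.2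

end lastBelow

namespace IsExcursion

variable {f : ℝ → ℝ} {s t : ℝ}

lemma infIcc_lastBelow (hf : IsExcursion f) (hs : s ∈ Icc (0:ℝ) 1) (hst : s ≤ t) :
    infIcc f (lastBelow f s (infIcc f s t)) t = infIcc f s t := by
  have hms := lastBelow_le (f := f) (c := infIcc f s t) hs.1
  refine le_antisymm (hf.infIcc_le_infIcc hst (Icc_subset_Icc hms le_rfl))
    (le_infIcc (hms.trans hst) fun u hu => ?_)
  rcases le_or_gt u s with hus | hsu
  · exact hf.le_apply_of_mem_Icc_lastBelow hs (hf.infIcc_le ⟨le_rfl, hst⟩) ⟨hu.1, hus⟩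
  · exact hf.infIcc_le ⟨hsu.le, hu.2⟩

lemma pre_lastBelow (hf : IsExcursion f) (hs : s ∈ Icc (0:ℝ) 1) (hst : s ≤ t) :
    pre f (lastBelow f s (infIcc f s t)) t := by
  refine ⟨(lastBelow_le hs.1).trans hst, ?_⟩
  rw [hf.infIcc_lastBelow hs hst]
  exact lm_lastBelow_le hf.leftLimEx hs (le_infIcc hst fun x _ => hf.apply_nonneg x)

lemma sSup_pre_eq_lastBelow (hf : IsExcursion f) (hs : s ∈ Icc (0:ℝ) 1) (hst : s ≤ t) :
    sSup {r : ℝ | 0 ≤ r ∧ r ≤ s ∧ pre f r t} = lastBelow f s (infIcc f s t) := by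
  refine IsGreatest.csSup_eq ⟨⟨lastBelow_nonneg, lastBelow_le hs.1, hf.pre_lastBelow hs hst⟩,
    fun r ⟨hr0, hrs, hrt⟩ => le_lastBelow hr0 hrs ?_⟩
  exact hrt.2.trans (hf.infIcc_le_infIcc hst (Icc_subset_Icc hrs le_rfl))

lemma mrca_eq_sSup_pre (hf : IsExcursion f) (hst : s ≤ t) :
    mrca f s t = sSup {r : ℝ | 0 ≤ r ∧ r ≤ s ∧ pre f r t} := by
  refine congrArg sSup (ext fun r => ⟨fun ⟨hr0, hrs, hrt⟩ => ⟨hr0, hrs.1, hrt⟩, ?_⟩)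
  exact fun ⟨hr0, hrs, hrt⟩ => ⟨hr0, hf.pre_of_pre_of_le hrt hrs hst, hrt⟩

end IsExcursion

theorem statement1_general (f : ℝ → ℝ) (hf : IsExcursion f) (s t : ℝ)
    (hs : s ∈ Icc (0:ℝ) 1) (hst : s ≤ t) :
    infIcc f (mrca f s t) t = infIcc f s t ∧
    mrca f s t = sSup {r : ℝ | 0 ≤ r ∧ r ≤ s ∧ pre f r t} ∧
    mrca f s t = sSup {r : ℝ | 0 ≤ r ∧ r ≤ s ∧ lm f r ≤ infIcc f s t} := by
  have hsup := hf.sSup_pre_eq_lastBelow hs hst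
  have hmrca : mrca f s t = lastBelow f s (infIcc f s t) := (hf.mrca_eq_sSup_pre hst).trans hsup
  exact ⟨hmrca ▸ hf.infIcc_lastBelow hs hst, hmrca.trans hsup.symm, hmrca⟩

theorem statement1 (f : ℝ → ℝ) (hf : IsExcursion f) (s t : ℝ)
    (hs : s ∈ Icc (0:ℝ) 1) (ht : t ∈ Icc (0:ℝ) 1) (hst : s ≤ t) :
    infIcc f (mrca f s t) t = infIcc f s t ∧
    mrca f s t = sSup {r : ℝ | 0 ≤ r ∧ r ≤ s ∧ pre f r t} ∧
    mrca f s t = sSup {r : ℝ | 0 ≤ r ∧ r ≤ s ∧ lm f r ≤ infIcc f s t} :=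
  statement1_general f hf s t hs hst
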